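/- arXiv:2009.03360 — 2 statements merged into one kernel-verified Lean document; each statement's English description precedes it below -/
import Mathlib

section
/- Let n ≥ 1 and let k₁,…,k_{2n} be integers with |k_j − k_{j+1}| ≥ 1 for every j = 1,…,2n−1. Define I'ₙ = ∫_{−π}^{π} [sin((k₁+k_{2n})η/2)/sin(η/2)] · ∏_{j=1}^{2n−1} [sin((k_j−k_{j+1})η/2) / ((k_j−k_{j+1}) sin(η/2))] dη. Then I'ₙ = 2π · sgn(k₁+k_{2n}) · (∏_{j=1}^{2n−1} 1/|k_j−k_{j+1}|) · N, where N is the number of tuples (m₁,…,m_{2n}) of integers with 0 ≤ m_j ≤ |k_j−k_{j+1}|−1 for j = 1,…,2n−1, 0 ≤ m_{2n} ≤ |k₁+k_{2n}|−1, and 2(m₁+⋯+m_{2n}) = ∑_{j=1}^{2n−1}|k_j−k_{j+1}| + |k₁+k_{2n}| − 2n. -/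
/-!
For `A : ℕ`, `sin (A θ) = sin θ · ∑_{m=0}^{A-1} e^{i(A-1-2m)θ}`. After pulling out the signs and
the factors `1/|k_j - k_{j+1}|`, the integrand is a product of `2n` quotients
`sin (A_i η/2) / sin (η/2)` with `A_i ∈ ℕ`, hence a sum, over the box of tuples `0 ≤ m_i < A_i`,
of `cos ((∑ A_i - 2n - 2 ∑ m_i) η/2)`. Since `∑ A_i ≡ (k₁ + k_{2n}) + (k₁ - k_{2n}) = 2k₁`
modulo 2, every such frequency is an even integer, so each cosine integrates over `(-π, π)` to
`2π` or `0` according as the frequency vanishes: the integral counts the tuples of the box with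
`2 ∑ m_i = ∑ A_i - 2n`.
-/

open Real intervalIntegral Finset

theorem Complex.sin_nat_mul_eq_sin_mul_sum (A : ℕ) (z : ℂ) :
    Complex.sin (A * z) =
      Complex.sin z * ∑ m ∈ Icc (0 : ℤ) (A - 1), Complex.exp ((A - 1 - 2 * m) * z * Complex.I) := by
  rw [Int.Icc_eq_finset_map, sum_map]
  simp only [sub_add_cancel, sub_zero, Int.toNat_natCast, Function.Embedding.trans_apply,
    Nat.castEmbedding_apply, addLeftEmbedding_apply, zero_add, Int.cast_natCast]
  set e : ℕ → ℂ := fun m => Complex.exp ((A - 2 * m) * z * Complex.I)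
  have hstep : ∀ m : ℕ, Complex.sin z * Complex.exp ((A - 1 - 2 * m) * z * Complex.I) =
      (e (m + 1) - e m) * Complex.I / 2 := by
    intro m
    have h1 : e (m + 1) =
        Complex.exp (-z * Complex.I) * Complex.exp ((A - 1 - 2 * m) * z * Complex.I) := by
      simp only [e, ← Complex.exp_add]; push_cast; ring_nf
    have h0 : e m =
        Complex.exp (z * Complex.I) * Complex.exp ((A - 1 - 2 * m) * z * Complex.I) := by
      simp only [e, ← Complex.exp_add]; ring_nf
    rw [h1, h0, Complex.sin]
    ring
  rw [mul_sum, sum_congr rfl fun m _ => hstep m, ← sum_div, ← sum_mul, sum_range_sub]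
  simp only [e, Complex.sin]
  push_cast
  ring_nf

theorem Real.sin_int_mul (K : ℤ) (x : ℝ) :
    Real.sin (K * x) = K.sign * Real.sin (K.natAbs * x) := by
  rcases lt_trichotomy K 0 with h | rfl | h
  · simp [Int.sign_eq_neg_one_of_neg h, Nat.cast_natAbs, abs_of_neg h, ← Real.sin_neg]
  · simp
  · simp [Int.sign_eq_one_of_pos h, Nat.cast_natAbs, abs_of_pos h]

theorem Real.sin_int_mul_div_int_mul (K : ℤ) (x s : ℝ) :
    Real.sin (K * x) / (K * s) = 1 / ((|K| : ℤ) : ℝ) * (Real.sin (K.natAbs * x) / s) := by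
  rcases lt_trichotomy K 0 with h | rfl | h
  · rw [Real.sin_int_mul, Int.sign_eq_neg_one_of_neg h, abs_of_neg h]
    push_cast
    ring
  · simp
  · rw [Real.sin_int_mul, Int.sign_eq_one_of_pos h, abs_of_pos h]
    push_cast
    ring

theorem integral_cos_int_mul (t : ℤ) :
    ∫ η in (-π)..π, Real.cos (t * η) = if t = 0 then 2 * π else 0 := by
  split_ifs with ht
  · simp [ht, two_mul]
  · rw [integral_comp_mul_left Real.cos (Int.cast_ne_zero.mpr ht), integral_cos, mul_neg,
      Real.sin_neg, Real.sin_int_mul_pi, neg_zero, sub_zero, smul_zero]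

section

variable {ι : Type*} [Fintype ι] [DecidableEq ι]

theorem Complex.prod_sin_nat_mul (A : ι → ℕ) (z : ℂ) :
    ∏ i, Complex.sin (A i * z) = Complex.sin z ^ Fintype.card ι *
      ∑ m ∈ Fintype.piFinset fun i => Icc (0 : ℤ) (A i - 1),
        Complex.exp ((∑ i, (A i : ℤ) - Fintype.card ι - 2 * ∑ i, m i : ℤ) * z * Complex.I) := by
  simp_rw [Complex.sin_nat_mul_eq_sin_mul_sum, prod_mul_distrib, prod_const, card_univ,
    prod_univ_sum, ← Complex.exp_sum]
  congr 2 with m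
  push_cast
  rw [← sum_mul, ← sum_mul]
  simp only [sum_sub_distrib, sum_const, card_univ, ← mul_sum, nsmul_eq_mul, mul_one]

theorem Real.prod_sin_nat_mul (A : ι → ℕ) (θ : ℝ) :
    ∏ i, Real.sin (A i * θ) = Real.sin θ ^ Fintype.card ι *
      ∑ m ∈ Fintype.piFinset fun i => Icc (0 : ℤ) (A i - 1),
        Real.cos ((∑ i, (A i : ℤ) - Fintype.card ι - 2 * ∑ i, m i : ℤ) * θ) := by
  have hexp : ∀ t : ℤ, (t : ℂ) * θ * Complex.I = ((t * θ : ℝ) : ℂ) * Complex.I := by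
    intro t; push_cast; rfl
  have h := congrArg Complex.re (Complex.prod_sin_nat_mul A θ)
  simp_rw [hexp, ← Complex.ofReal_natCast, ← Complex.ofReal_mul, ← Complex.ofReal_sin,
    ← Complex.ofReal_prod, ← Complex.ofReal_pow, Complex.re_ofReal_mul, Complex.ofReal_re,
    Complex.re_sum, Complex.exp_ofReal_mul_I_re] at h
  exact h

theorem Real.sin_half_ne_zero_of_mem_uIoc {η : ℝ} (hη : η ∈ Set.uIoc (-π) π) (h0 : η ≠ 0) :
    Real.sin (η / 2) ≠ 0 := by
  rw [Set.uIoc_of_le (by linarith [pi_pos])] at hη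
  rw [Ne, Real.sin_eq_zero_iff_of_lt_of_lt (by linarith [hη.1, pi_pos])
    (by linarith [hη.2, pi_pos])]
  exact div_ne_zero h0 two_ne_zero

theorem integral_prod_sin_nat_mul_div_sin (A : ι → ℕ)
    (hA : Even (∑ i, (A i : ℤ) - Fintype.card ι)) :
    ∫ η in (-π)..π, ∏ i, Real.sin (A i * η / 2) / Real.sin (η / 2) =
      2 * π * #{m ∈ Fintype.piFinset fun i => Icc (0 : ℤ) (A i - 1) |
        2 * ∑ i, m i = ∑ i, (A i : ℤ) - Fintype.card ι} := by
  obtain ⟨r, hr⟩ := hA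
  have hae : ∀ᵐ η, η ∈ Set.uIoc (-π) π → ∏ i, Real.sin (A i * η / 2) / Real.sin (η / 2) =
      ∑ m ∈ Fintype.piFinset (fun i => Icc (0 : ℤ) (A i - 1)),
        Real.cos ((r - ∑ i, m i : ℤ) * η) := by
    filter_upwards [MeasureTheory.Measure.ae_ne MeasureTheory.volume 0] with η h0 hη
    simp_rw [prod_div_distrib, mul_div_assoc, Real.prod_sin_nat_mul, prod_const, card_univ,
      mul_div_cancel_left₀ _ (pow_ne_zero _ (Real.sin_half_ne_zero_of_mem_uIoc hη h0)), hr]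
    congr 1 with m
    push_cast
    ring_nf
  rw [integral_congr_ae hae,
    integral_finsetSum fun m _ => (by fun_prop : Continuous _).intervalIntegrable _ _,
    natCast_card_filter, mul_sum]
  refine sum_congr rfl fun m _ => ?_
  rw [integral_cos_int_mul, mul_ite, mul_one, mul_zero]
  exact if_congr (by omega) rfl rfl

end

theorem Int.even_abs_sub_self (a : ℤ) : Even (|a| - a) := by
  rw [Int.even_sub, ← Int.natCast_natAbs, Int.even_coe_nat, Int.natAbs_even]

theorem Int.even_sum_abs_sub_sum {ι : Type*} (s : Finset ι) (f : ι → ℤ) :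
    Even (∑ i ∈ s, |f i| - ∑ i ∈ s, f i) := by
  rw [← sum_sub_distrib]
  exact even_sum _ fun i _ => Int.even_abs_sub_self (f i)

@[to_additive]
theorem Fin.prod_univ_eq_mul_prod_Icc {M : Type*} [CommMonoid M] {N : ℕ} (hN : 1 ≤ N)
    (g : ℕ → M) : ∏ i : Fin N, g i = g (N - 1) * ∏ j ∈ Icc 1 (N - 1), g (j - 1) := by
  obtain ⟨N, rfl⟩ : ∃ N', N = N' + 1 := ⟨N - 1, by omega⟩
  rw [Fin.prod_univ_castSucc, mul_comm, ← Ico_add_one_right_eq_Icc, prod_Ico_eq_prod_range]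
  simp [Fin.prod_univ_eq_prod_range (fun i => g i), add_comm 1]

theorem Finset.sum_Icc_sub_succ {M : Type*} [AddCommGroup M] (k : ℕ → M) {N : ℕ} (hN : 1 ≤ N) :
    ∑ j ∈ Icc 1 N, (k j - k (j + 1)) = k 1 - k (N + 1) := by
  rw [← neg_sub (k (N + 1)), ← sum_Icc_sub hN, ← sum_neg_distrib]
  simp only [neg_sub]

def frequency (n : ℕ) (k : ℕ → ℤ) (i : ℕ) : ℤ :=
  if i + 1 ≤ 2 * n - 1 then k (i + 1) - k (i + 2) else k 1 + k (2 * n)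

@[to_additive]
theorem prod_frequency {M : Type*} [CommMonoid M] {n : ℕ} (hn : 1 ≤ n) (k : ℕ → ℤ) (g : ℤ → M) :
    ∏ i : Fin (2 * n), g (frequency n k i) =
      g (k 1 + k (2 * n)) * ∏ j ∈ Icc 1 (2 * n - 1), g (k j - k (j + 1)) := by
  rw [Fin.prod_univ_eq_mul_prod_Icc (by omega) fun i => g (frequency n k i)]
  congr 1
  · rw [frequency, if_neg (by omega)]
  · refine prod_congr rfl fun j hj => ?_
    rw [mem_Icc] at hj
    rw [frequency, if_pos (by omega), Nat.sub_add_cancel hj.1, show j - 1 + 2 = j + 1 by omega]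

theorem even_sum_natAbs_frequency {n : ℕ} (hn : 1 ≤ n) (k : ℕ → ℤ) :
    Even (∑ i : Fin (2 * n), ((frequency n k i).natAbs : ℤ) - Fintype.card (Fin (2 * n))) := by
  have hsum : ∑ i : Fin (2 * n), frequency n k i = 2 * k 1 := by
    have h := sum_frequency hn k id
    simp only [id] at h
    rw [h, Finset.sum_Icc_sub_succ k (show 1 ≤ 2 * n - 1 by omega), Nat.sub_add_cancel (by omega)]
    ring
  have h := Int.even_sum_abs_sub_sum univ fun i : Fin (2 * n) => frequency n k i
  rw [hsum] at h
  have hsplit : ∑ i : Fin (2 * n), ((frequency n k i).natAbs : ℤ) - Fintype.card (Fin (2 * n)) =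
      (∑ i : Fin (2 * n), |frequency n k i| - 2 * k 1) + 2 * (k 1 - n) := by
    simp only [Int.natCast_natAbs, Fintype.card_fin]
    push_cast
    ring
  rw [hsplit]
  exact h.add (even_two_mul _)

theorem forall_mem_Icc_abs_frequency_iff {n : ℕ} (k : ℕ → ℤ) (m : Fin (2 * n) → ℤ) :
    (∀ i : Fin (2 * n), m i ∈ Icc 0 (|frequency n k i| - 1)) ↔
      (∀ i : Fin (2 * n), 0 ≤ m i) ∧
      (∀ i : Fin (2 * n), (i : ℕ) + 1 ≤ 2 * n - 1 → m i ≤ |k ((i : ℕ) + 1) - k ((i : ℕ) + 2)| - 1) ∧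
      (∀ i : Fin (2 * n), (i : ℕ) + 1 = 2 * n → m i ≤ |k 1 + k (2 * n)| - 1) := by
  simp only [mem_Icc, forall_and]
  refine and_congr_right fun _ => ⟨fun h => ⟨fun i hi => ?_, fun i hi => ?_⟩, fun h i => ?_⟩
  · simpa [frequency, hi] using h i
  · simpa [frequency, show ¬((i : ℕ) + 1 ≤ 2 * n - 1) by omega] using h i
  · by_cases hi : (i : ℕ) + 1 ≤ 2 * n - 1
    · simpa [frequency, hi] using h.1 i hi
    · simpa [frequency, hi] using h.2 i (by omega)

theorem In'_eq_general (n : ℕ) (hn : 1 ≤ n) (k : ℕ → ℤ) :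
    ∫ η in (-π)..π,
        (Real.sin (((k 1 + k (2 * n) : ℤ) : ℝ) * η / 2) / Real.sin (η / 2)) *
          ∏ j ∈ Finset.Icc 1 (2 * n - 1),
            Real.sin (((k j - k (j + 1) : ℤ) : ℝ) * η / 2) /
              (((k j - k (j + 1) : ℤ) : ℝ) * Real.sin (η / 2))
      = 2 * π * ((Int.sign (k 1 + k (2 * n)) : ℤ) : ℝ) *
          (∏ j ∈ Finset.Icc 1 (2 * n - 1), (1 / ((|k j - k (j + 1)| : ℤ) : ℝ))) *
          (({ m : Fin (2 * n) → ℤ |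
              (∀ i : Fin (2 * n), 0 ≤ m i) ∧
              (∀ i : Fin (2 * n), (i : ℕ) + 1 ≤ 2 * n - 1 →
                m i ≤ |k ((i : ℕ) + 1) - k ((i : ℕ) + 2)| - 1) ∧
              (∀ i : Fin (2 * n), (i : ℕ) + 1 = 2 * n →
                m i ≤ |k 1 + k (2 * n)| - 1) ∧
              2 * (∑ i, m i) =
                (∑ j ∈ Finset.Icc 1 (2 * n - 1), |k j - k (j + 1)|) +
                  |k 1 + k (2 * n)| - 2 * n }).ncard : ℝ) := by
  have hpt : ∀ η : ℝ,
      (Real.sin (((k 1 + k (2 * n) : ℤ) : ℝ) * η / 2) / Real.sin (η / 2)) *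
          ∏ j ∈ Finset.Icc 1 (2 * n - 1),
            Real.sin (((k j - k (j + 1) : ℤ) : ℝ) * η / 2) /
              (((k j - k (j + 1) : ℤ) : ℝ) * Real.sin (η / 2)) =
        ((k 1 + k (2 * n)).sign * ∏ j ∈ Icc 1 (2 * n - 1), (1 / ((|k j - k (j + 1)| : ℤ) : ℝ))) *
          ∏ i : Fin (2 * n), Real.sin ((frequency n k i).natAbs * η / 2) / Real.sin (η / 2) := by
    intro η
    simp only [mul_div_assoc, Real.sin_int_mul_div_int_mul, prod_mul_distrib]
    rw [Real.sin_int_mul,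
      prod_frequency hn k fun K => Real.sin (K.natAbs * (η / 2)) / Real.sin (η / 2)]
    ring
  rw [integral_congr fun η _ => hpt η, integral_const_mul,
    integral_prod_sin_nat_mul_div_sin _ (even_sum_natAbs_frequency hn k)]
  rw [show ∀ a b c d : ℝ, a * b * (c * d) = c * a * b * d from fun _ _ _ _ => by ring]
  congr 2
  rw [← Set.ncard_coe_finset]
  congr 1
  ext m
  simp only [coe_filter, Set.mem_ofPred_eq, Fintype.mem_piFinset, Int.natCast_natAbs,
    Fintype.card_fin]
  rw [forall_mem_Icc_abs_frequency_iff, sum_frequency hn k abs, add_comm |k 1 + k (2 * n)|]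
  push_cast
  simp only [and_assoc]

/-- Exact evaluation of the integral `I'ₙ`: for `n ≥ 1` and integers
`k₁, …, k_{2n}` with `|k_j − k_{j+1}| ≥ 1` for `j = 1, …, 2n−1`,
`I'ₙ = 2π · sgn(k₁+k_{2n}) · (∏_{j=1}^{2n−1} 1/|k_j−k_{j+1}|) · N`, where `N` is the
number of integer tuples `(m₁,…,m_{2n})` with `0 ≤ m_j ≤ |k_j−k_{j+1}|−1` for
`j = 1,…,2n−1`, `0 ≤ m_{2n} ≤ |k₁+k_{2n}|−1`, and
`2(m₁+⋯+m_{2n}) = ∑_{j=1}^{2n−1}|k_j−k_{j+1}| + |k₁+k_{2n}| − 2n`. -/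
theorem In'_eq (n : ℕ) (hn : 1 ≤ n) (k : ℕ → ℤ)
    (hk : ∀ j, 1 ≤ j → j ≤ 2 * n - 1 → 1 ≤ |k j - k (j + 1)|) :
    ∫ η in (-π)..π,
        (Real.sin (((k 1 + k (2 * n) : ℤ) : ℝ) * η / 2) / Real.sin (η / 2)) *
          ∏ j ∈ Finset.Icc 1 (2 * n - 1),
            Real.sin (((k j - k (j + 1) : ℤ) : ℝ) * η / 2) /
              (((k j - k (j + 1) : ℤ) : ℝ) * Real.sin (η / 2))
      = 2 * π * ((Int.sign (k 1 + k (2 * n)) : ℤ) : ℝ) *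
          (∏ j ∈ Finset.Icc 1 (2 * n - 1), (1 / ((|k j - k (j + 1)| : ℤ) : ℝ))) *
          (({ m : Fin (2 * n) → ℤ |
              (∀ i : Fin (2 * n), 0 ≤ m i) ∧
              (∀ i : Fin (2 * n), (i : ℕ) + 1 ≤ 2 * n - 1 →
                m i ≤ |k ((i : ℕ) + 1) - k ((i : ℕ) + 2)| - 1) ∧
              (∀ i : Fin (2 * n), (i : ℕ) + 1 = 2 * n →
                m i ≤ |k 1 + k (2 * n)| - 1) ∧
              2 * (∑ i, m i) =
                (∑ j ∈ Finset.Icc 1 (2 * n - 1), |k j - k (j + 1)|) +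
                  |k 1 + k (2 * n)| - 2 * n }).ncard : ℝ) :=
  In'_eq_general n hn k
end

section
/- Let A_μ ∈ (−1,1) and A_e > 0, and define F₀(θ) = (2A_e/(1−A_μ))·X⋆''(θ) = −(2A_e/(1−A_μ))·X⋆(θ). Then for every θ ∈ ℝ, F₀(θ) + (A_μ/π) ∫_{−π}^{π} M(θ,η) F₀(η) dη = 2A_e·X⋆''(θ); that is, F₀ is the steady-state force on the unit circle for the viscosity-contrast boundary integral equation. -/
open Real intervalIntegral

/-- The counterclockwise unit-circle parametrization `X⋆(θ) = (cos θ, sin θ)`. -/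
noncomputable def Xstar (θ : ℝ) : Fin 2 → ℝ := ![Real.cos θ, Real.sin θ]

/-- The matrix kernel
`M(θ,η) = (1/2)·[[1−cos(θ+η), −sin(θ+η)], [−sin(θ+η), 1+cos(θ+η)]]`. -/
noncomputable def Mmat (θ η : ℝ) : Matrix (Fin 2) (Fin 2) ℝ :=
  (1 / 2 : ℝ) •
    !![1 - Real.cos (θ + η), -Real.sin (θ + η);
       -Real.sin (θ + η), 1 + Real.cos (θ + η)]

/-!
The kernel acts on the circle by `M(θ,η) X⋆(η) = (X⋆(η) − X⋆(θ))/2` (angle-addition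
formulas), and `X⋆` has mean zero over a period, so `∫_{−π}^{π} M(θ,η) X⋆(η) dη = −π X⋆(θ)`.
Hence the integral operator acts on multiples of `X⋆` as multiplication by `−A_μ`, and
`F₀ = c·X⋆''` solves the equation exactly when `(1 − A_μ) c = 2A_e`.
-/

lemma continuous_Xstar : Continuous Xstar :=
  continuous_pi fun i => by fin_cases i <;> simp only [Xstar] <;> fun_prop

lemma integral_Xstar (a b : ℝ) :
    ∫ η in a..b, Xstar η = ![Real.sin b - Real.sin a, Real.cos a - Real.cos b] := by
  have hderiv : ∀ η ∈ Set.uIcc a b,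
      HasDerivAt (fun t => (![Real.sin t, -Real.cos t] : Fin 2 → ℝ)) (Xstar η) η := by
    intro η _
    rw [hasDerivAt_pi]
    intro i
    fin_cases i
    · simpa [Xstar] using Real.hasDerivAt_sin η
    · simpa [Xstar] using (Real.hasDerivAt_cos η).fun_neg
  rw [integral_eq_sub_of_hasDerivAt hderiv (continuous_Xstar.intervalIntegrable _ _)]
  ext i
  fin_cases i <;> simp [sub_eq_add_neg, add_comm]

lemma integral_Xstar_neg_pi_pi : ∫ η in (-π)..π, Xstar η = 0 := by
  rw [integral_Xstar]
  ext i
  fin_cases i <;> simp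

lemma Mmat_mulVec_Xstar (θ η : ℝ) :
    (Mmat θ η).mulVec (Xstar η) = (1 / 2 : ℝ) • (Xstar η - Xstar θ) := by
  ext i
  fin_cases i <;>
    simp only [Mmat, Xstar, one_div, cos_add, sin_add, neg_add_rev, Matrix.smul_of,
      Matrix.smul_cons, smul_eq_mul, Matrix.smul_empty, Fin.zero_eta, Fin.mk_one, Fin.isValue,
      Matrix.mulVec_cons, Matrix.mulVec_empty, add_zero, Pi.add_apply, Pi.smul_apply,
      Function.comp_apply, Matrix.cons_val_zero, Matrix.cons_val_one, Matrix.cons_val_fin_one,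
      Matrix.head_cons, Matrix.tail_cons, Matrix.sub_cons, sub_self, Matrix.zero_empty]
  · linear_combination -(1 / 2 : ℝ) * cos θ * sin_sq_add_cos_sq η
  · linear_combination -(1 / 2 : ℝ) * sin θ * sin_sq_add_cos_sq η

lemma integral_Mmat_mulVec_Xstar (θ : ℝ) :
    ∫ η in (-π)..π, (Mmat θ η).mulVec (Xstar η) = (-π) • Xstar θ := by
  simp_rw [Mmat_mulVec_Xstar]
  rw [integral_smul,
    integral_sub (continuous_Xstar.intervalIntegrable _ _) intervalIntegrable_const,
    integral_Xstar_neg_pi_pi, integral_const]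
  match_scalars
  ring

theorem steadyState_force_general (Aμ Ae : ℝ) (hμ : Aμ ∈ Set.Ioo (-1 : ℝ) 1)
    (F₀ : ℝ → Fin 2 → ℝ)
    (hF₀ : ∀ θ, F₀ θ = (2 * Ae / (1 - Aμ)) • (-(Xstar θ))) :
    ∀ θ : ℝ,
      F₀ θ + (Aμ / π) • (∫ η in (-π)..π, (Mmat θ η).mulVec (F₀ η)) =
        (2 * Ae) • (-(Xstar θ)) := by
  intro θ
  have hμ₁ : 1 - Aμ ≠ 0 := sub_ne_zero_of_ne hμ.2.ne'
  simp_rw [hF₀, Matrix.mulVec_smul, Matrix.mulVec_neg, integral_smul, integral_neg,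
    integral_Mmat_mulVec_Xstar]
  match_scalars
  field_simp
  ring

/-- `F₀(θ) = (2A_e/(1−A_μ))·X⋆''(θ) = −(2A_e/(1−A_μ))·X⋆(θ)` is the steady-state
force on the unit circle for the viscosity-contrast boundary integral equation:
for every `θ`, `F₀(θ) + (A_μ/π)∫_{−π}^{π} M(θ,η)F₀(η)dη = 2A_e·X⋆''(θ)`. -/
theorem steadyState_force (Aμ Ae : ℝ) (hμ : Aμ ∈ Set.Ioo (-1 : ℝ) 1) (hAe : 0 < Ae)
    (F₀ : ℝ → Fin 2 → ℝ)
    (hF₀ : ∀ θ, F₀ θ = (2 * Ae / (1 - Aμ)) • (-(Xstar θ))) :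
    ∀ θ : ℝ,
      F₀ θ + (Aμ / π) • (∫ η in (-π)..π, (Mmat θ η).mulVec (F₀ η)) =
        (2 * Ae) • (-(Xstar θ)) :=
  steadyState_force_general Aμ Ae hμ F₀ hF₀
end
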